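/- arXiv:2409.03551 — 3 statements merged into one kernel-verified Lean document; each statement's English description precedes it below -/
import Mathlib

section
/- Let h_1, ..., h_K be independent random vectors in ℂ^N, each symmetric (h_i =d -h_i), with all relevant moments finite. Let P = diag(p_1,...,p_K) with p_i ≥ 0, Z a fixed positive semidefinite N×N matrix, σ² > 0, and H = [h_1,...,h_K]. Define Π = E[ P^{1/2} Hᴴ (H P Hᴴ + Z + σ² I_N)^{-1} H P^{1/2} ]. Then Π is a diagonal matrix, i.e., [Π]_{i,j} = 0 for i ≠ j. -/
/-!
Flipping the sign of the `i`-th channel leaves the joint law of `(h_1, …, h_K)` unchanged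
(independence plus symmetry of `h_i`) and replaces `H` by `H D` with `D = diag(1, …, -1, …, 1)`.
Since `D` commutes with `P` and `P^{1/2}` and `D P Dᴴ = P`, the integrand becomes `D M D`, whose
`(i, j)` entry is `-M_ij` for `j ≠ i`. Hence `E[M_ij] = -E[M_ij] = 0`.
-/

open MeasureTheory ProbabilityTheory Matrix
open scoped ComplexOrder

theorem ProbabilityTheory.iIndepFun.identDistrib_pi {Ω ι : Type*} [MeasurableSpace Ω]
    {μ : Measure Ω} [Fintype ι] {β : ι → Type*} [∀ i, MeasurableSpace (β i)]
    {f g : ∀ i, Ω → β i} (hf : iIndepFun f μ) (hg : iIndepFun g μ)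
    (hfg : ∀ i, IdentDistrib (f i) (g i) μ μ) :
    IdentDistrib (fun ω i => f i ω) (fun ω i => g i ω) μ μ where
  aemeasurable_fst := aemeasurable_pi_lambda _ fun i => (hfg i).aemeasurable_fst
  aemeasurable_snd := aemeasurable_pi_lambda _ fun i => (hfg i).aemeasurable_snd
  map_eq := by
    rw [hf.map_fun_eq_pi_map fun i => (hfg i).aemeasurable_fst,
      hg.map_fun_eq_pi_map fun i => (hfg i).aemeasurable_snd]
    exact congrArg Measure.pi (funext fun i => (hfg i).map_eq)

namespace Matrix

variable {n ι 𝕜 : Type*} [Fintype n] [DecidableEq n] [Fintype ι] [DecidableEq ι]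

/-- With `q = √p` this is `P^{1/2} Hᴴ V` for the local MMSE combiner
`V = (H P Hᴴ + C)⁻¹ H P^{1/2}`. -/
noncomputable def mmseGain [CommRing 𝕜] [StarRing 𝕜] (q p : ι → 𝕜) (C : Matrix n n 𝕜)
    (H : Matrix n ι 𝕜) : Matrix ι ι 𝕜 :=
  diagonal q * Hᴴ * (H * diagonal p * Hᴴ + C)⁻¹ * H * diagonal q

theorem mmseGain_mul_diagonal [CommRing 𝕜] [StarRing 𝕜] (q p : ι → 𝕜) (C : Matrix n n 𝕜)
    (H : Matrix n ι 𝕜) {d : ι → 𝕜} (hd : ∀ k, d k * star (d k) = 1) :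
    mmseGain q p C (H * diagonal d) = (diagonal d)ᴴ * mmseGain q p C H * diagonal d := by
  set D := diagonal d
  have hPD : H * D * diagonal p * (H * D)ᴴ = H * diagonal p * Hᴴ := by
    have hDPD : D * diagonal p * Dᴴ = diagonal p := by
      simp only [D, diagonal_conjTranspose, diagonal_mul_diagonal, Pi.star_apply]
      congr 1
      funext k
      rw [mul_right_comm, hd, one_mul]
    rw [conjTranspose_mul]
    nth_rewrite 2 [← hDPD]
    simp only [Matrix.mul_assoc]
  have hQD : ∀ e : ι → 𝕜, diagonal q * diagonal e = diagonal e * diagonal q := fun e =>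
    (commute_diagonal q e).eq
  rw [mmseGain, mmseGain, hPD]
  simp only [conjTranspose_mul, D, diagonal_conjTranspose, Matrix.mul_assoc]
  rw [← Matrix.mul_assoc (diagonal q), hQD, ← hQD d, Matrix.mul_assoc]

theorem measurable_mmseGain_apply [RCLike 𝕜] {X : Type*} [TopologicalSpace X]
    [MeasurableSpace X] [OpensMeasurableSpace X] (q p : ι → 𝕜) (C : Matrix n n 𝕜)
    {H : X → Matrix n ι 𝕜} (hH : Continuous H) (i j : ι) :
    Measurable fun x => mmseGain q p C (H x) i j := by
  set B := fun x => H x * diagonal p * (H x)ᴴ + C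
  have hB : Continuous B :=
    ((hH.matrix_mul continuous_const).matrix_mul hH.matrix_conjTranspose).add continuous_const
  -- Cramer's rule isolates the only discontinuity, `(det B)⁻¹`.
  have hgain : ∀ x, mmseGain q p C (H x) i j =
      ((B x).det)⁻¹ * (diagonal q * (H x)ᴴ * (B x).adjugate * H x * diagonal q) i j := by
    intro x
    simp only [mmseGain, inv_def, Ring.inverse_eq_inv', Matrix.mul_smul, Matrix.smul_mul,
      smul_apply, smul_eq_mul, B]
  simp only [hgain]
  refine hB.matrix_det.measurable.inv.mul (Continuous.measurable ?_)
  exact ((((continuous_const.matrix_mul hH.matrix_conjTranspose).matrix_mul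
    hB.matrix_adjugate).matrix_mul hH).matrix_mul continuous_const).matrix_elem i j

end Matrix

theorem pi_matrix_diagonal_of_symmetric_channels_general
    {Ω : Type*} [MeasurableSpace Ω] {μ : Measure Ω} [IsProbabilityMeasure μ]
    {N K : ℕ} (h : Fin K → Ω → (Fin N → ℂ))
    (hmeas : ∀ i, Measurable (h i))
    (hindep : iIndepFun h μ)
    (hsymm : ∀ i, Measure.map (h i) μ = Measure.map (fun ω => -h i ω) μ)
    (p : Fin K → ℝ)
    (Z : Matrix (Fin N) (Fin N) ℂ)
    (σ2 : ℝ)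
    (H : Ω → Matrix (Fin N) (Fin K) ℂ)
    (hH : ∀ ω, H ω = Matrix.of fun n k => h k ω n)
    (P Phalf : Matrix (Fin K) (Fin K) ℂ)
    (hP : P = Matrix.diagonal fun i => (p i : ℂ))
    (hPhalf : Phalf = Matrix.diagonal fun i => (Real.sqrt (p i) : ℂ))
    (M : Ω → Matrix (Fin K) (Fin K) ℂ)
    (hM : ∀ ω, M ω =
      Phalf * (H ω)ᴴ * (H ω * P * (H ω)ᴴ + Z + (σ2 : ℂ) • 1)⁻¹ * H ω * Phalf)
    (Pmat : Matrix (Fin K) (Fin K) ℂ)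
    (hPmat : ∀ i j, Pmat i j = ∫ ω, M ω i j ∂μ) :
    ∀ i j, i ≠ j → Pmat i j = 0 := by
  intro i j hij
  let chan : (Fin K → Fin N → ℂ) → Matrix (Fin N) (Fin K) ℂ := fun x => of fun n k => x k n
  let gain (x : Fin K → Fin N → ℂ) : Matrix (Fin K) (Fin K) ℂ :=
    mmseGain (fun k => (√(p k) : ℂ)) (fun k => (p k : ℂ)) (Z + (σ2 : ℂ) • 1) (chan x)
  have hM_gain : ∀ ω, M ω = gain fun k => h k ω := by
    intro ω
    rw [hM, hH, hP, hPhalf, add_assoc]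
    rfl
  let d : Fin K → ℂ := Function.update 1 i (-1)
  have hgain_flip : ∀ x, gain (fun k => d k • x k) i j = -gain x i j := by
    intro x
    have hchan : chan (fun k => d k • x k) = chan x * diagonal d := by
      ext n k
      simp [chan, mul_comm]
    have hd : ∀ k, d k * star (d k) = 1 := by
      intro k
      by_cases hk : k = i <;> simp [d, hk]
    simp [gain, hchan, mmseGain_mul_diagonal _ _ _ _ hd, diagonal_conjTranspose, mul_diagonal,
      diagonal_mul, d, hij.symm]
  have hflip_law : IdentDistrib (fun ω k => h k ω) (fun ω k => d k • h k ω) μ μ := by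
    refine hindep.identDistrib_pi (hindep.comp _ fun k => measurable_const_smul (d k)) fun k => ?_
    by_cases hk : k = i
    · subst hk
      simpa [d] using ⟨(hmeas k).aemeasurable, (hmeas k).neg.aemeasurable, hsymm k⟩
    · simpa [d, hk] using IdentDistrib.refl (hmeas k).aemeasurable
  have hgain_meas : Measurable fun x => gain x i j :=
    measurable_mmseGain_apply _ _ _
      (continuous_matrix fun n k => (continuous_apply n).comp (continuous_apply k)) i j
  have hneg : ∫ ω, M ω i j ∂μ = -∫ ω, M ω i j ∂μ := by
    simpa [hM_gain, hgain_flip, integral_neg] using (hflip_law.comp hgain_meas).integral_eq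
  rw [hPmat]
  exact self_eq_neg.mp hneg

/-- For independent symmetric channel estimates `h_1, …, h_K`, the matrix
`Π = E[P^{1/2} Hᴴ (H P Hᴴ + Z + σ² I)⁻¹ H P^{1/2}]` is diagonal. -/
theorem pi_matrix_diagonal_of_symmetric_channels
    {Ω : Type*} [MeasurableSpace Ω] {μ : Measure Ω} [IsProbabilityMeasure μ]
    {N K : ℕ} (h : Fin K → Ω → (Fin N → ℂ))
    (hmeas : ∀ i, Measurable (h i))
    (hindep : iIndepFun h μ)
    (hsymm : ∀ i, Measure.map (h i) μ = Measure.map (fun ω => -h i ω) μ)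
    (p : Fin K → ℝ) (hp : ∀ i, 0 ≤ p i)
    (Z : Matrix (Fin N) (Fin N) ℂ) (hZ : Z.PosSemidef)
    (σ2 : ℝ) (hσ2 : 0 < σ2)
    (H : Ω → Matrix (Fin N) (Fin K) ℂ)
    (hH : ∀ ω, H ω = Matrix.of fun n k => h k ω n)
    (P Phalf : Matrix (Fin K) (Fin K) ℂ)
    (hP : P = Matrix.diagonal fun i => (p i : ℂ))
    (hPhalf : Phalf = Matrix.diagonal fun i => (Real.sqrt (p i) : ℂ))
    (M : Ω → Matrix (Fin K) (Fin K) ℂ)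
    (hM : ∀ ω, M ω =
      Phalf * (H ω)ᴴ * (H ω * P * (H ω)ᴴ + Z + (σ2 : ℂ) • 1)⁻¹ * H ω * Phalf)
    (hint : ∀ i j, Integrable (fun ω => M ω i j) μ)
    (Pmat : Matrix (Fin K) (Fin K) ℂ)
    (hPmat : ∀ i j, Pmat i j = ∫ ω, M ω i j ∂μ) :
    ∀ i j, i ≠ j → Pmat i j = 0 :=
  pi_matrix_diagonal_of_symmetric_channels_general h hmeas hindep hsymm p Z σ2 H hH P Phalf hP
    hPhalf M hM Pmat hPmat
end

section
/- Let Π_1, ..., Π_L ∈ ℂ^{K×K} be Hermitian matrices each satisfying 0 ≼ Π_l ≺ I_K, and let 𝓛_k ⊆ {1,...,L} be nonempty. Then the linear system in unknowns (c_l)_{l ∈ 𝓛_k}, c_l ∈ ℂ^K: c_l + Σ_{j ∈ 𝓛_k, j ≠ l} Π_j c_j = e_k for all l ∈ 𝓛_k, has at most one solution. -/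
/-!
Put `d := c - c'` and `w := ∑ j, Π_j d_j`. Subtracting the systems and adding `Π_l d_l` to both
sides gives `(1 - Π_l) d_l = -w` for every `l`, hence
`‖w‖² = ∑ j, ⟪w, Π_j d_j⟫ = -∑ j, ⟪d_j, (1 - Π_j) Π_j d_j⟫ ≤ 0`,
because the commuting matrices `Π_j` and `1 - Π_j` are positive semidefinite and so is their
product. Thus `w = 0`, and `d_l = 0` since `1 - Π_l` is invertible.
-/

open Matrix Finset
open scoped ComplexOrder MatrixOrder Matrix.Norms.L2Operator

namespace Matrix

variable {n 𝕜 : Type*} [Fintype n] [DecidableEq n] [RCLike 𝕜]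

theorem PosSemidef.mul_one_sub {P : Matrix n n 𝕜} (hP : P.PosSemidef) (h : (1 - P).PosSemidef) :
    (P * (1 - P)).PosSemidef :=
  (Commute.mul_nonneg hP.nonneg h.nonneg
    ((Commute.one_right P).sub_right (Commute.refl P))).posSemidef

theorem PosSemidef.star_one_sub_mulVec_dotProduct_mulVec_nonneg {P : Matrix n n 𝕜}
    (hP : P.PosSemidef) (h : (1 - P).PosSemidef) (x : n → 𝕜) :
    0 ≤ star ((1 - P) *ᵥ x) ⬝ᵥ P *ᵥ x := by
  have := (hP.mul_one_sub h).dotProduct_mulVec_nonneg x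
  rwa [star_mulVec, h.isHermitian.eq, dotProduct_mulVec, vecMul_vecMul, ← dotProduct_mulVec,
    (Commute.one_left P |>.sub_left (Commute.refl P)).eq]

variable {ι : Type*} [DecidableEq ι] {P : ι → Matrix n n 𝕜} {s : Finset ι} {d : ι → n → 𝕜}

theorem one_sub_mulVec_eq_neg_sum_mulVec {l : ι} (hl : l ∈ s)
    (hd : d l + ∑ j ∈ s.erase l, P j *ᵥ d j = 0) :
    (1 - P l) *ᵥ d l = -∑ j ∈ s, P j *ᵥ d j := by
  rw [← add_sum_erase s _ hl, sub_mulVec, one_mulVec, eq_neg_of_add_eq_zero_right hd]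
  abel

theorem eq_zero_of_add_sum_erase_mulVec_eq_zero (hP : ∀ j, (P j).PosSemidef)
    (hlt : ∀ j, (1 - P j).PosDef) (hd : ∀ l ∈ s, d l + ∑ j ∈ s.erase l, P j *ᵥ d j = 0) :
    ∀ l ∈ s, d l = 0 := by
  set w := ∑ j ∈ s, P j *ᵥ d j
  have hw : ∀ l ∈ s, (1 - P l) *ᵥ d l = -w := fun l hl ↦
    one_sub_mulVec_eq_neg_sum_mulVec hl (hd l hl)
  have hw_nonpos : star w ⬝ᵥ w ≤ 0 := by
    rw [dotProduct_sum]
    refine sum_nonpos fun j hj ↦ ?_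
    rw [← neg_neg w, ← hw j hj, star_neg, neg_dotProduct, neg_nonpos]
    exact (hP j).star_one_sub_mulVec_dotProduct_mulVec_nonneg (hlt j).posSemidef (d j)
  have hw0 : w = 0 :=
    dotProduct_star_self_eq_zero.mp (hw_nonpos.antisymm (dotProduct_star_self_nonneg w))
  intro l hl
  apply mulVec_injective_of_isUnit (hlt l).isUnit
  rw [hw l hl, hw0, neg_zero, mulVec_zero]

end Matrix

theorem ltmmse_system_unique_solution_general
    {L K : ℕ} (Pmat : Fin L → Matrix (Fin K) (Fin K) ℂ)
    (hpsd : ∀ l, (Pmat l).PosSemidef)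
    (hlt : ∀ l, (1 - Pmat l).PosDef)
    (k : Fin K) (Lk : Finset (Fin L))
    (c c' : Fin L → (Fin K → ℂ))
    (heq : ∀ l ∈ Lk,
      c l + ∑ j ∈ Lk.erase l, (Pmat j).mulVec (c j) = Pi.single k 1)
    (heq' : ∀ l ∈ Lk,
      c' l + ∑ j ∈ Lk.erase l, (Pmat j).mulVec (c' j) = Pi.single k 1) :
    ∀ l ∈ Lk, c l = c' l := by
  have hdiff : ∀ l ∈ Lk, (c - c') l + ∑ j ∈ Lk.erase l, Pmat j *ᵥ (c - c') j = 0 := by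
    intro l hl
    simp only [Pi.sub_apply, mulVec_sub, sum_sub_distrib]
    rw [sub_add_sub_comm, heq l hl, heq' l hl, sub_self]
  intro l hl
  exact sub_eq_zero.mp (eq_zero_of_add_sum_erase_mulVec_eq_zero hpsd hlt hdiff l hl)

/-- Uniqueness of the solution of the LTMMSE linear system when each `Π_l`
is Hermitian with `0 ≼ Π_l ≺ I`. -/
theorem ltmmse_system_unique_solution
    {L K : ℕ} (Pmat : Fin L → Matrix (Fin K) (Fin K) ℂ)
    (hpsd : ∀ l, (Pmat l).PosSemidef)
    (hlt : ∀ l, (1 - Pmat l).PosDef)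
    (k : Fin K) (Lk : Finset (Fin L)) (hLk : Lk.Nonempty)
    (c c' : Fin L → (Fin K → ℂ))
    (heq : ∀ l ∈ Lk,
      c l + ∑ j ∈ Lk.erase l, (Pmat j).mulVec (c j) = Pi.single k 1)
    (heq' : ∀ l ∈ Lk,
      c' l + ∑ j ∈ Lk.erase l, (Pmat j).mulVec (c' j) = Pi.single k 1) :
    ∀ l ∈ Lk, c l = c' l :=
  ltmmse_system_unique_solution_general Pmat hpsd hlt k Lk c c' heq heq'
end

section
/- With Π_l as in the LTMMSE system, suppose additionally every Π_l is Hermitian with 0 ≼ Π_l ≺ I and all Π_l are diagonal with equal real diagonal entries π_l ∈ [0,1) in coordinate k. Then the scalar system γ_l + Σ_{j ∈ 𝓛_k \ {l}} π_j γ_j = 1 (l ∈ 𝓛_k) has the explicit unique solution γ_l = ((1 - π_l)(1 + Σ_{j ∈ 𝓛_k} π_j/(1 - π_j)))^{-1} for each l ∈ 𝓛_k. -/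
/-!
With `T = ∑_{j ∈ s} π_j γ_j`, the `l`-th equation reads `(1 - π_l) γ_l + T = 1`, so every solution
has the form `γ_l = (1 - T) / (1 - π_l)`. Substituting back gives `T = (1 - T)(S - 1)` with
`S = 1 + ∑_{j ∈ s} π_j / (1 - π_j)`, i.e. `1 - T = S⁻¹`, which pins down `γ` uniquely.
-/

open Finset

section ScalarSystem

variable {ι K : Type*} [Field K] {π : ι → K} {s : Finset ι}

theorem sum_mul_inv_one_sub_mul_inv (c : K) :
    ∑ j ∈ s, π j * ((1 - π j) * c)⁻¹ = (∑ j ∈ s, π j / (1 - π j)) * c⁻¹ := by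
  rw [sum_mul]
  refine sum_congr rfl fun j _ => ?_
  rw [mul_inv, div_eq_mul_inv]
  ring

variable [DecidableEq ι]

theorem add_sum_erase_mul_eq {γ : ι → K} {l : ι} (hl : l ∈ s) :
    γ l + ∑ j ∈ s.erase l, π j * γ j = (1 - π l) * γ l + ∑ j ∈ s, π j * γ j := by
  rw [sum_erase_eq_sub hl]
  ring

theorem scalar_system_of_eq_inv (hπ : ∀ j ∈ s, π j ≠ 1)
    (hS : 1 + ∑ j ∈ s, π j / (1 - π j) ≠ 0) {γ : ι → K}
    (hγ : ∀ l ∈ s, γ l = ((1 - π l) * (1 + ∑ j ∈ s, π j / (1 - π j)))⁻¹) :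
    ∀ l ∈ s, γ l + ∑ j ∈ s.erase l, π j * γ j = 1 := by
  intro l hl
  have hl' : 1 - π l ≠ 0 := sub_ne_zero.mpr (hπ l hl).symm
  rw [add_sum_erase_mul_eq hl, sum_congr rfl fun j hj => by rw [hγ j hj], hγ l hl,
    sum_mul_inv_one_sub_mul_inv]
  field_simp

theorem eq_inv_of_scalar_system (hπ : ∀ j ∈ s, π j ≠ 1) {γ : ι → K}
    (hγ : ∀ l ∈ s, γ l + ∑ j ∈ s.erase l, π j * γ j = 1) :
    ∀ l ∈ s, γ l = ((1 - π l) * (1 + ∑ j ∈ s, π j / (1 - π j)))⁻¹ := by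
  set S := 1 + ∑ j ∈ s, π j / (1 - π j)
  set T := ∑ j ∈ s, π j * γ j
  have hne : ∀ l ∈ s, 1 - π l ≠ 0 := fun l hl => sub_ne_zero.mpr (hπ l hl).symm
  have hγT : ∀ l ∈ s, γ l = (1 - T) / (1 - π l) := fun l hl => by
    rw [eq_div_iff (hne l hl)]
    linear_combination (add_sum_erase_mul_eq hl).symm.trans (hγ l hl)
  have hT : T = (1 - T) * (S - 1) := by
    calc T = ∑ j ∈ s, π j * ((1 - T) / (1 - π j)) := sum_congr rfl fun j hj => by rw [← hγT j hj]
      _ = (1 - T) * (S - 1) := by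
        rw [add_sub_cancel_left, mul_sum]
        exact sum_congr rfl fun j _ => by ring
  have hTS : 1 - T = S⁻¹ := by
    refine eq_inv_of_mul_eq_one_left ?_
    linear_combination -hT
  intro l hl
  rw [hγT l hl, hTS, mul_inv, div_eq_mul_inv, mul_comm]

end ScalarSystem

theorem one_add_sum_div_one_sub_pos {ι : Type*} {π : ι → ℝ} {s : Finset ι}
    (hπ : ∀ j ∈ s, 0 ≤ π j ∧ π j < 1) :
    0 < 1 + ∑ j ∈ s, π j / (1 - π j) := by
  have : 0 ≤ ∑ j ∈ s, π j / (1 - π j) :=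
    sum_nonneg fun j hj => div_nonneg (hπ j hj).1 (sub_nonneg.mpr (hπ j hj).2.le)
  linarith

theorem lsfd_scalar_system_explicit_solution_general
    {L : ℕ} (π : Fin L → ℝ) (hπ : ∀ l, 0 ≤ π l ∧ π l < 1)
    (Lk : Finset (Fin L))
    (γ : Fin L → ℝ)
    (hγ : ∀ l, γ l = ((1 - π l) * (1 + ∑ j ∈ Lk, π j / (1 - π j)))⁻¹) :
    (∀ l ∈ Lk, γ l + ∑ j ∈ Lk.erase l, π j * γ j = 1) ∧
      ∀ γ' : Fin L → ℂ,
        (∀ l ∈ Lk, γ' l + ∑ j ∈ Lk.erase l, (π j : ℂ) * γ' j = 1) →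
        ∀ l ∈ Lk, γ' l = (γ l : ℂ) := by
  have hπ1 : ∀ j ∈ Lk, π j ≠ 1 := fun j _ => (hπ j).2.ne
  have hS := one_add_sum_div_one_sub_pos fun j (_ : j ∈ Lk) => hπ j
  refine ⟨scalar_system_of_eq_inv hπ1 hS.ne' fun l _ => hγ l, fun γ' hγ' l hl => ?_⟩
  have hπ1ℂ : ∀ j ∈ Lk, (π j : ℂ) ≠ 1 := fun j hj => by exact_mod_cast hπ1 j hj
  rw [eq_inv_of_scalar_system hπ1ℂ (γ := γ') hγ' l hl, hγ l]
  push_cast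
  rfl

/-- Explicit unique solution of the scalar LSFD-type system
`γ_l + Σ_{j ∈ 𝓛_k \ {l}} π_j γ_j = 1` when all `π_j ∈ [0,1)`:
`γ_l = ((1 - π_l)(1 + Σ_{j ∈ 𝓛_k} π_j/(1 - π_j)))⁻¹`. -/
theorem lsfd_scalar_system_explicit_solution
    {L : ℕ} (π : Fin L → ℝ) (hπ : ∀ l, 0 ≤ π l ∧ π l < 1)
    (Lk : Finset (Fin L)) (hLk : Lk.Nonempty)
    (γ : Fin L → ℝ)
    (hγ : ∀ l, γ l = ((1 - π l) * (1 + ∑ j ∈ Lk, π j / (1 - π j)))⁻¹) :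
    (∀ l ∈ Lk, γ l + ∑ j ∈ Lk.erase l, π j * γ j = 1) ∧
      ∀ γ' : Fin L → ℂ,
        (∀ l ∈ Lk, γ' l + ∑ j ∈ Lk.erase l, (π j : ℂ) * γ' j = 1) →
        ∀ l ∈ Lk, γ' l = (γ l : ℂ) :=
  lsfd_scalar_system_explicit_solution_general π hπ Lk γ hγ
end
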